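/- Let e₁, e₂, e₁', e₂' be integers with e₂ > e₁ ≥ 0 and e₂' > e₁' ≥ 0, and suppose (e₁, e₂) ≠ (e₁', e₂'). Define σ, σ' : SL(2,k) → SL(4,k) by σ(A) = A^{(p^{e₂})} ⊗ A^{(p^{e₁})} and σ'(A) = A^{(p^{e₂'})} ⊗ A^{(p^{e₁'})}. Then σ and σ' are not equivalent: there exists no P ∈ GL(4,k) such that P⁻¹·σ(A)·P = σ'(A) for all A ∈ SL(2,k). -/

import Mathlib

/-!
Equivalent representations have equal characters. On the torus `diag(t, t⁻¹)` the trace of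
`A ↦ A^{(b)} ⊗ A^{(a)}` is `(t^b + t^{-b})(t^a + t^{-a})`, so for `a = p^{e₁}`, `b = p^{e₂}` and
their primed versions, multiplying by a power of `t` turns the equality of characters into an
identity of polynomials over the infinite field `k`. The degree of `(X^{2b} + 1)(X^{2a} + 1)` gives
`a + b`, and then the degree of the remaining part `X^{2b} + X^{2a} + 1` gives `b`.
-/

open Matrix

/-- Entrywise `m`-th power of a 2×2 matrix: `A^{(m)} = [[a^m, b^m],[c^m, d^m]]`. -/
noncomputable def entryPow {k : Type*} [Field k] (A : Matrix (Fin 2) (Fin 2) k) (m : ℕ) :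
    Matrix (Fin 2) (Fin 2) k :=
  Matrix.of fun i j => A i j ^ m

/-- The Kronecker product of two 2×2 matrices as a 4×4 matrix in 2×2 blocks. -/
noncomputable def kron4 {k : Type*} [Field k] (X Y : Matrix (Fin 2) (Fin 2) k) :
    Matrix (Fin 4) (Fin 4) k :=
  !![X 0 0 * Y 0 0, X 0 0 * Y 0 1, X 0 1 * Y 0 0, X 0 1 * Y 0 1;
     X 0 0 * Y 1 0, X 0 0 * Y 1 1, X 0 1 * Y 1 0, X 0 1 * Y 1 1;
     X 1 0 * Y 0 0, X 1 0 * Y 0 1, X 1 1 * Y 0 0, X 1 1 * Y 0 1;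
     X 1 0 * Y 1 0, X 1 0 * Y 1 1, X 1 1 * Y 1 0, X 1 1 * Y 1 1]

open Polynomial

section
variable {k : Type*} [Field k]

theorem trace_kron4 (X Y : Matrix (Fin 2) (Fin 2) k) :
    (kron4 X Y).trace = X.trace * Y.trace := by
  simp only [kron4, trace, diag, Fin.sum_univ_four, Fin.sum_univ_two, of_apply, cons_val',
    cons_val_zero, cons_val_one, cons_val_two, cons_val_three, head_cons, tail_cons, empty_val',
    cons_val_fin_one, head_fin_const]
  ring

theorem trace_entryPow (A : Matrix (Fin 2) (Fin 2) k) (m : ℕ) :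
    (entryPow A m).trace = A 0 0 ^ m + A 1 1 ^ m := by
  simp [entryPow, trace, Fin.sum_univ_two]

def torusCharacter (a b : ℕ) (t : k) : k :=
  (t ^ b + t⁻¹ ^ b) * (t ^ a + t⁻¹ ^ a)

theorem trace_kron4_entryPow_diagonal (a b : ℕ) (t : k) :
    (kron4 (entryPow !![t, 0; 0, t⁻¹] b) (entryPow !![t, 0; 0, t⁻¹] a)).trace =
      torusCharacter a b t := by
  simp [trace_kron4, trace_entryPow, torusCharacter]

theorem torusCharacter_mul_pow (a b : ℕ) {t : k} (ht : t ≠ 0) :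
    torusCharacter a b t * t ^ (a + b) =
      ((X ^ (2 * b) + 1) * (X ^ (2 * a) + 1) : k[X]).eval t := by
  have hinv (n : ℕ) : t ^ n * t⁻¹ ^ n = 1 := by rw [← mul_pow, mul_inv_cancel₀ ht, one_pow]
  simp only [torusCharacter, eval_mul, eval_add, eval_pow, eval_X, eval_one]
  linear_combination (t ^ (2 * a) + t ^ a * t⁻¹ ^ a) * hinv b + (t ^ (2 * b) + 1) * hinv a

theorem monic_X_pow_add_one {R : Type*} [Semiring R] {n : ℕ} (hn : n ≠ 0) :
    (X ^ n + 1 : R[X]).Monic := by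
  simpa using monic_X_pow_add_C (1 : R) hn

theorem natDegree_X_pow_add_one_mul {m n : ℕ} (hm : m ≠ 0) (hn : n ≠ 0) :
    ((X ^ n + 1) * (X ^ m + 1) : k[X]).natDegree = n + m := by
  rw [(monic_X_pow_add_one hn).natDegree_mul (monic_X_pow_add_one hm), ← C_1,
    natDegree_X_pow_add_C, natDegree_X_pow_add_C]

theorem natDegree_X_pow_add_X_pow_add_one {m n : ℕ} (hm : 0 < m) (hmn : m < n) :
    (X ^ n + X ^ m + 1 : k[X]).natDegree = n := by
  compute_degree!
  · simp [hmn.ne', show n ≠ 0 by omega]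
  all_goals omega

theorem eq_of_X_pow_add_one_mul_eq {m n m' n' : ℕ} (hm : 0 < m) (hmn : m < n)
    (hm' : 0 < m') (hmn' : m' < n')
    (h : ((X ^ n + 1) * (X ^ m + 1) : k[X]) = (X ^ n' + 1) * (X ^ m' + 1)) :
    m = m' ∧ n = n' := by
  have hsum : n + m = n' + m' := by
    rw [← natDegree_X_pow_add_one_mul (k := k) hm.ne' (by omega), h,
      natDegree_X_pow_add_one_mul hm'.ne' (by omega)]
  have htop : (X ^ n * X ^ m : k[X]) = X ^ n' * X ^ m' := by rw [← pow_add, ← pow_add, hsum]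
  have hrest : (X ^ n + X ^ m + 1 : k[X]) = X ^ n' + X ^ m' + 1 := by
    linear_combination h - htop
  have hn : n = n' := by
    rw [← natDegree_X_pow_add_X_pow_add_one (k := k) hm hmn, hrest,
      natDegree_X_pow_add_X_pow_add_one hm' hmn']
  exact ⟨by omega, hn⟩

theorem eq_of_torusCharacter_eq [Infinite k] {a b a' b' : ℕ} (ha : 0 < a) (hab : a < b)
    (ha' : 0 < a') (hab' : a' < b')
    (h : ∀ t : k, t ≠ 0 → torusCharacter a b t = torusCharacter a' b' t) :
    a = a' ∧ b = b' := by
  have hpoly : ((X ^ (2 * b) + 1) * (X ^ (2 * a) + 1) * X ^ (a' + b') : k[X]) =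
      (X ^ (2 * b') + 1) * (X ^ (2 * a') + 1) * X ^ (a + b) := by
    refine eq_of_infinite_eval_eq _ _ ((Set.finite_singleton (0 : k)).infinite_compl.mono ?_)
    intro t (ht : t ≠ 0)
    rw [Set.mem_ofPred_eq, eval_mul_X_pow, eval_mul_X_pow, ← torusCharacter_mul_pow _ _ ht,
      ← torusCharacter_mul_pow _ _ ht, h t ht]
    ring
  have hsum : a + b = a' + b' := by
    have hdeg {m n : ℕ} (c : ℕ) (hm : m ≠ 0) (hn : n ≠ 0) :
        ((X ^ n + 1) * (X ^ m + 1) * X ^ c : k[X]).natDegree = n + m + c := by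
      rw [natDegree_mul_X_pow _ ((monic_X_pow_add_one hn).mul (monic_X_pow_add_one hm)).ne_zero,
        natDegree_X_pow_add_one_mul hm hn]
    have := congrArg natDegree hpoly
    rw [hdeg _ (by omega) (by omega), hdeg _ (by omega) (by omega)] at this
    omega
  rw [hsum] at hpoly
  obtain ⟨h₁, h₂⟩ := eq_of_X_pow_add_one_mul_eq (by omega) (by omega) (by omega) (by omega)
    (mul_right_cancel₀ (pow_ne_zero _ X_ne_zero) hpoly)
  exact ⟨by omega, by omega⟩

end

theorem stmt18_general {k : Type*} [Field k] [IsAlgClosed k] {p : ℕ} [Fact p.Prime]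
    (e₁ e₂ e₁' e₂' : ℕ) (h : e₁ < e₂) (h' : e₁' < e₂')
    (hne : (e₁, e₂) ≠ (e₁', e₂')) :
    ¬∃ P : GL (Fin 4) k, ∀ A : SpecialLinearGroup (Fin 2) k,
      ((P⁻¹ : GL (Fin 4) k) : Matrix (Fin 4) (Fin 4) k) *
          kron4 (entryPow A.1 (p ^ e₂)) (entryPow A.1 (p ^ e₁)) *
          (P : Matrix (Fin 4) (Fin 4) k) =
        kron4 (entryPow A.1 (p ^ e₂')) (entryPow A.1 (p ^ e₁')) := by
  rintro ⟨P, hP⟩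
  have hp : 2 ≤ p := (Fact.out : p.Prime).two_le
  have hchar (t : k) (ht : t ≠ 0) :
      torusCharacter (p ^ e₁) (p ^ e₂) t = torusCharacter (p ^ e₁') (p ^ e₂') t := by
    have hdet : (!![t, 0; 0, t⁻¹] : Matrix (Fin 2) (Fin 2) k).det = 1 := by
      simp [det_fin_two_of, mul_inv_cancel₀ ht]
    rw [← trace_kron4_entryPow_diagonal, ← trace_kron4_entryPow_diagonal, ← hP ⟨_, hdet⟩,
      trace_units_conj']
  obtain ⟨h₁, h₂⟩ := eq_of_torusCharacter_eq (by positivity) (Nat.pow_lt_pow_right hp h)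
    (by positivity) (Nat.pow_lt_pow_right hp h') hchar
  exact hne (Prod.ext (Nat.pow_right_injective hp h₁) (Nat.pow_right_injective hp h₂))

/-- Two Kronecker-product homomorphisms
`σ(A) = A^{(p^{e₂})} ⊗ A^{(p^{e₁})}` and `σ'(A) = A^{(p^{e₂'})} ⊗ A^{(p^{e₁'})}` with
distinct parameter pairs `(e₁,e₂) ≠ (e₁',e₂')` are not equivalent. -/
theorem stmt18 {k : Type*} [Field k] [IsAlgClosed k] {p : ℕ} [Fact p.Prime] [CharP k p]
    (e₁ e₂ e₁' e₂' : ℕ) (h : e₁ < e₂) (h' : e₁' < e₂')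
    (hne : (e₁, e₂) ≠ (e₁', e₂')) :
    ¬∃ P : GL (Fin 4) k, ∀ A : SpecialLinearGroup (Fin 2) k,
      ((P⁻¹ : GL (Fin 4) k) : Matrix (Fin 4) (Fin 4) k) *
          kron4 (entryPow A.1 (p ^ e₂)) (entryPow A.1 (p ^ e₁)) *
          (P : Matrix (Fin 4) (Fin 4) k) =
        kron4 (entryPow A.1 (p ^ e₂')) (entryPow A.1 (p ^ e₁')) :=
  stmt18_general e₁ e₂ e₁' e₂' h h' hne
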